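/- arXiv:2409.15005 — 4 statements merged into one kernel-verified Lean document; each statement's English description precedes it below -/
import Mathlib

section
/- Let p, β, α, c be positive reals and R₊, R finite cardinalities with 0 < |R₊| ≤ |R| and p ≥ α·c/|R|. If (α·c + β·|R₊|)² ≤ α²·c²·(1 + β/p), then 2·|R₊| + β·|R₊|²/(α·c) ≤ |R|, and hence β·|R₊|²/(α·c) ≤ 2·(|R| - |R₊|) - |R|. -/
/-- The algebraic core of the half-overspend claim in the analysis of BOS Equal Shares:
for positive reals `p, β, α, c` and cardinalities `0 < |R₊| ≤ |R|` with `p ≥ α·c/|R|`,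
the inequality `(α·c + β·|R₊|)² ≤ α²·c²·(1 + β/p)` implies
`2·|R₊| + β·|R₊|²/(α·c) ≤ |R|`, and hence `β·|R₊|²/(α·c) ≤ 2·(|R| - |R₊|) - |R|`. -/
theorem bos_half_overspend_algebra (p β α c : ℝ) (Rplus R : ℕ)
    (hp : 0 < p) (hβ : 0 < β) (hα : 0 < α) (hc : 0 < c)
    (hRplus : 0 < Rplus) (hle : Rplus ≤ R)
    (hpc : p ≥ α * c / R)
    (h : (α * c + β * Rplus) ^ 2 ≤ α ^ 2 * c ^ 2 * (1 + β / p)) :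
    2 * (Rplus : ℝ) + β * (Rplus : ℝ) ^ 2 / (α * c) ≤ R ∧
    β * (Rplus : ℝ) ^ 2 / (α * c) ≤ 2 * ((R : ℝ) - Rplus) - R := by
  have hac : 0 < α * c := mul_pos hα hc
  have hR : (0 : ℝ) < R := by
    have : 0 < R := lt_of_lt_of_le hRplus hle
    exact_mod_cast this
  -- 1/p ≤ R/(α c)
  have hinv : β / p ≤ β * R / (α * c) := by
    rw [div_le_div_iff₀ hp hac]
    have := (div_le_iff₀ hR).mp hpc
    nlinarith
  have h2 : (α * c + β * Rplus) ^ 2 ≤ α ^ 2 * c ^ 2 * (1 + β * R / (α * c)) := by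
    refine h.trans ?_
    have : (0:ℝ) < α ^ 2 * c ^ 2 := by positivity
    nlinarith
  have key : 2 * (Rplus : ℝ) + β * (Rplus : ℝ) ^ 2 / (α * c) ≤ R := by
    have hsq : α ^ 2 * c ^ 2 * (1 + β * R / (α * c)) = α ^ 2 * c ^ 2 + α * c * (β * R) := by
      field_simp
    rw [hsq] at h2
    have hdiv : β * (Rplus : ℝ) ^ 2 / (α * c) ≤ (R : ℝ) - 2 * Rplus := by
      rw [div_le_iff₀ hac]
      nlinarith
    linarith
  exact ⟨key, by linarith⟩
end

section
/- In the approval-based committee election with 4ℓ² + ℓ voters and budget k = 4ℓ² + ℓ (all candidates of unit cost), where: ℓ voters (group V₁) each approve the same ℓ candidates C₁; and 4ℓ² voters split into 2ℓ subgroups of size 2ℓ each approve 4ℓ² - ℓ common candidates C₂ plus one distinct candidate per subgroup from a set C₃ of 2ℓ candidates — the group V₁ deserves ℓ = ⌈(k-ℓ)/(4ℓ)⌉ candidates in the EJR sense (|V₁| ≥ ℓ·n/k), yet there is a valid execution of BOS Equal Shares (with suitable tie-breaking) whose output contains no candidate from C₁, leaving every voter in V₁ with zero representatives. -/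
/-! The Method of Equal Shares with Bounded Overspending (BOS), formalized as a
nondeterministic round-based procedure. -/

/-- Candidate `c` is `(α,ρ)`-affordable given remaining budgets `b`. -/
def affordableBOS {V C : Type*} [Fintype V] (cost : C → ℝ) (u : V → C → ℝ)
    (b : V → ℝ) (c : C) (α ρ : ℝ) : Prop :=
  0 < α ∧ α ≤ 1 ∧ 0 < ρ ∧ α * cost c = ∑ i : V, min (b i) (α * u i c * ρ)

/-- One round of BOS: among candidates fitting in the remaining budget, select an
`(α,ρ)`-affordable candidate minimizing `ρ/α`, and charge the voters. -/
def BOSStep {V C : Type*} [Fintype V] [DecidableEq C] (budget : ℝ) (cost : C → ℝ)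
    (u : V → C → ℝ) (b : V → ℝ) (W : Finset C) (c : C) (α ρ : ℝ) (b' : V → ℝ) : Prop :=
  c ∉ W ∧ cost c ≤ budget - ∑ c' ∈ W, cost c' ∧
    affordableBOS cost u b c α ρ ∧
    (∀ c' ∉ W, cost c' ≤ budget - ∑ c'' ∈ W, cost c'' →
      ∀ α' ρ', affordableBOS cost u b c' α' ρ' → ρ / α ≤ ρ' / α') ∧
    (∀ i, b' i = max 0 (b i - u i c * ρ))

/-- States reachable by BOS from the initial equal endowments `budget/n`. -/
inductive BOSReach {V C : Type*} [Fintype V] [DecidableEq C] (budget : ℝ) (cost : C → ℝ)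
    (u : V → C → ℝ) : (V → ℝ) → Finset C → Prop
  | init : BOSReach budget cost u (fun _ => budget / (Fintype.card V : ℝ)) ∅
  | step {b : V → ℝ} {W : Finset C} {c : C} {α ρ : ℝ} {b' : V → ℝ} :
      BOSReach budget cost u b W → BOSStep budget cost u b W c α ρ b' →
      BOSReach budget cost u b' (insert c W)

/-- `W` is an outcome of (some valid execution of) BOS. -/
def BOSOutcome {V C : Type*} [Fintype V] [DecidableEq C] (budget : ℝ) (cost : C → ℝ)
    (u : V → C → ℝ) (W : Finset C) : Prop :=
  ∃ b : V → ℝ, BOSReach budget cost u b W ∧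
    ∀ (c : C) (α ρ : ℝ) (b' : V → ℝ), ¬ BOSStep budget cost u b W c α ρ b'

namespace BOSneg

open Finset

/-! ### Generic counting toolkit -/

/-- Sum over `Fin M` of a function constant below and above a cut point. -/
lemma fin_sum_two (M a : ℕ) (ha : a ≤ M) (f : Fin M → ℝ) (x y : ℝ)
    (h1 : ∀ i : Fin M, (i : ℕ) < a → f i = x)
    (h2 : ∀ i : Fin M, a ≤ (i : ℕ) → f i = y) :
    ∑ i, f i = (a : ℝ) * x + ((M - a : ℕ) : ℝ) * y := by
  have hcong : ∀ i : Fin M, f i = (fun t : ℕ => if t < a then x else y) (i : ℕ) := by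
    intro i; by_cases h : (i : ℕ) < a
    · simp [h, h1 i h]
    · simp [h, h2 i (le_of_not_gt h)]
  rw [Finset.sum_congr rfl fun i _ => hcong i,
    Fin.sum_univ_eq_sum_range (fun t => if t < a then x else y) M]
  rw [Finset.range_eq_Ico, ← Finset.sum_Ico_consecutive _ (Nat.zero_le a) ha]
  have e1 : ∑ t ∈ Finset.Ico 0 a, (if t < a then x else y) = ((a - 0 : ℕ) : ℝ) * x := by
    have : ∀ t ∈ Finset.Ico 0 a, (if t < a then x else y) = x := by
      intro t ht; simp [(Finset.mem_Ico.1 ht).2]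
    rw [Finset.sum_congr rfl this, Finset.sum_const, Nat.card_Ico, nsmul_eq_mul]
  have e2 : ∑ t ∈ Finset.Ico a M, (if t < a then x else y) = ((M - a : ℕ) : ℝ) * y := by
    have : ∀ t ∈ Finset.Ico a M, (if t < a then x else y) = y := by
      intro t ht; simp [Nat.not_lt.2 (Finset.mem_Ico.1 ht).1]
    rw [Finset.sum_congr rfl this, Finset.sum_const, Nat.card_Ico, nsmul_eq_mul]
  rw [e1, e2]; norm_num

/-- Sum over `Fin M` of a function constant on four consecutive intervals. -/
lemma fin_sum_four (M a b c : ℕ) (hab : a ≤ b) (hbc : b ≤ c) (hcM : c ≤ M)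
    (f : Fin M → ℝ) (x y z w : ℝ)
    (h1 : ∀ i : Fin M, (i : ℕ) < a → f i = x)
    (h2 : ∀ i : Fin M, a ≤ (i : ℕ) → (i : ℕ) < b → f i = y)
    (h3 : ∀ i : Fin M, b ≤ (i : ℕ) → (i : ℕ) < c → f i = z)
    (h4 : ∀ i : Fin M, c ≤ (i : ℕ) → f i = w) :
    ∑ i, f i = (a : ℝ) * x + ((b - a : ℕ) : ℝ) * y + ((c - b : ℕ) : ℝ) * z
      + ((M - c : ℕ) : ℝ) * w := by
  set F : ℕ → ℝ := fun t => if t < a then x else if t < b then y else if t < c then z else w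
    with hF
  have hcong : ∀ i : Fin M, f i = F (i : ℕ) := by
    intro i
    rcases lt_or_ge (i : ℕ) a with h | h
    · simp [hF, h, h1 i h]
    rcases lt_or_ge (i : ℕ) b with h' | h'
    · simp [hF, Nat.not_lt.2 h, h', h2 i h h']
    rcases lt_or_ge (i : ℕ) c with h'' | h''
    · simp [hF, Nat.not_lt.2 h, Nat.not_lt.2 h', h'', h3 i h' h'']
    · simp [hF, Nat.not_lt.2 h, Nat.not_lt.2 h', Nat.not_lt.2 h'', h4 i h'']
  rw [Finset.sum_congr rfl fun i _ => hcong i, Fin.sum_univ_eq_sum_range F M]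
  have key : ∀ p q : ℕ, p ≤ q → ∀ v : ℝ, (∀ t, p ≤ t → t < q → F t = v) →
      ∑ t ∈ Finset.Ico p q, F t = ((q - p : ℕ) : ℝ) * v := by
    intro p q hpq v hv
    have : ∀ t ∈ Finset.Ico p q, F t = v := fun t ht =>
      hv t (Finset.mem_Ico.1 ht).1 (Finset.mem_Ico.1 ht).2
    rw [Finset.sum_congr rfl this, Finset.sum_const, Nat.card_Ico, nsmul_eq_mul]
  rw [Finset.range_eq_Ico,
    ← Finset.sum_Ico_consecutive F (Nat.zero_le a) (hab.trans (hbc.trans hcM)),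
    ← Finset.sum_Ico_consecutive F hab (hbc.trans hcM),
    ← Finset.sum_Ico_consecutive F hbc hcM]
  rw [key 0 a (Nat.zero_le a) x (fun t _ ht => by simp [hF, ht]),
    key a b hab y (fun t ht ht' => by simp [hF, Nat.not_lt.2 ht, ht']),
    key b c hbc z (fun t ht ht' => by simp [hF, Nat.not_lt.2 (hab.trans ht), Nat.not_lt.2 ht, ht']),
    key c M hcM w (fun t ht => by
      simp [hF, Nat.not_lt.2 ((hab.trans hbc).trans ht), Nat.not_lt.2 (hbc.trans ht),
        Nat.not_lt.2 ht])]
  norm_num [Nat.sub_zero]; ring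

/-- Sum of an interval indicator scaled by `x`. -/
lemma fin_sum_ind (M a b : ℕ) (hab : a ≤ b) (hb : b ≤ M) (x : ℝ) :
    ∑ i : Fin M, (if a ≤ (i : ℕ) ∧ (i : ℕ) < b then x else 0)
      = ((b - a : ℕ) : ℝ) * x := by
  have := fin_sum_four M a b M hab hb le_rfl
    (fun i => if a ≤ (i : ℕ) ∧ (i : ℕ) < b then x else 0) 0 x 0 0
    (fun i hi => by simp; omega) (fun i h1 h2 => by simp [h1, h2])
    (fun i h1 h2 => by simp; omega) (fun i h1 => by simp; omega)
  rw [this]; simp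

lemma card_filter_Ico (M a b : ℕ) (hb : b ≤ M) :
    (Finset.univ.filter fun c : Fin M => a ≤ (c : ℕ) ∧ (c : ℕ) < b).card = b - a := by
  rw [Finset.card_filter]
  rw [Fin.sum_univ_eq_sum_range (fun t => if a ≤ t ∧ t < b then 1 else 0) M]
  rw [← Finset.card_filter]
  have : Finset.filter (fun t => a ≤ t ∧ t < b) (Finset.range M) = Finset.Ico a b := by
    ext t; simp [Finset.mem_Ico]; omega
  rw [this, Nat.card_Ico]

/-! ### Generic affordability bounds -/

/-- From affordability at unit cost, `ρ ≥ 1/S` whenever `∑ u ≤ S`. -/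
lemma rho_ge {V C : Type*} [Fintype V] (cost : C → ℝ) (u : V → C → ℝ)
    (b : V → ℝ) (c : C) (α ρ : ℝ) (hcost : cost c = 1)
    (h : affordableBOS cost u b c α ρ) (S : ℝ) (hS : ∑ i : V, u i c ≤ S)
    (hSpos : 0 < S) : 1 / S ≤ ρ := by
  obtain ⟨hα, hα1, hρ, heq⟩ := h
  have h1 : α * 1 ≤ α * ρ * S := by
    calc α * 1 = ∑ i : V, min (b i) (α * u i c * ρ) := by rw [← hcost, heq]
      _ ≤ ∑ i : V, α * u i c * ρ := Finset.sum_le_sum fun i _ => min_le_right _ _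
      _ = α * ρ * ∑ i : V, u i c := by
          rw [Finset.mul_sum]
          exact Finset.sum_congr rfl fun i _ => by ring
      _ ≤ α * ρ * S := by
          apply mul_le_mul_of_nonneg_left hS (by positivity)
  have h2 : 1 ≤ ρ * S := by
    have := (mul_le_mul_iff_right₀ hα).1 (by linarith : α * 1 ≤ α * (ρ * S))
    linarith
  rw [div_le_iff₀ hSpos]; linarith

/-- From affordability, `α ≤ A` for any pointwise bound `g` on the payments with `∑ g ≤ A`. -/
lemma alpha_le {V C : Type*} [Fintype V] (cost : C → ℝ) (u : V → C → ℝ)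
    (b : V → ℝ) (c : C) (α ρ : ℝ) (hcost : cost c = 1)
    (h : affordableBOS cost u b c α ρ) (g : V → ℝ)
    (hg : ∀ i, min (b i) (α * u i c * ρ) ≤ g i) (A : ℝ)
    (hA : ∑ i : V, g i ≤ A) : α ≤ A := by
  obtain ⟨hα, hα1, hρ, heq⟩ := h
  calc α = α * cost c := by rw [hcost, mul_one]
    _ = ∑ i : V, min (b i) (α * u i c * ρ) := heq
    _ ≤ ∑ i : V, g i := Finset.sum_le_sum fun i _ => hg i
    _ ≤ A := hA

lemma ratio_ge_of (α ρ r : ℝ) (hα : 0 < α) (hα1 : α ≤ 1) (hρ : r ≤ ρ) (hr : 0 ≤ r) :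
    r ≤ ρ / α := by
  rw [le_div_iff₀ hα]; nlinarith

lemma ratio_ge_of' (α ρ r : ℝ) (hα : 0 < α) (hα1 : α ≤ 1/2) (hρ : r/2 ≤ ρ) (hr : 0 ≤ r) :
    r ≤ ρ / α := by
  rw [le_div_iff₀ hα]; nlinarith


/-! ### The lower-bound instance -/

variable (ℓ : ℕ)

/-- The approval utilities of the lower-bound instance. -/
noncomputable def uu : Fin (4*ℓ^2 + ℓ) → Fin (4*ℓ^2 + 2*ℓ) → ℝ :=
  fun i c =>
    if ((i : ℕ) < ℓ ∧ (c : ℕ) < ℓ) ∨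
       (ℓ ≤ (i : ℕ) ∧ ((ℓ ≤ (c : ℕ) ∧ (c : ℕ) < 4*ℓ^2) ∨
         (c : ℕ) = 4*ℓ^2 + ((i : ℕ) - ℓ) / (2*ℓ)))
    then (1 : ℝ) else 0

/-- Budgets after `m` rounds of phase 1 (buying `C₂`). -/
noncomputable def bb1 (m : ℕ) : Fin (4*ℓ^2 + ℓ) → ℝ :=
  fun i => if (i : ℕ) < ℓ then 1 else 1 - (m : ℝ) / (4*(ℓ:ℝ)^2)

/-- Budgets after `j` rounds of phase 2 (buying `C₃`). -/
noncomputable def bb2 (j : ℕ) : Fin (4*ℓ^2 + ℓ) → ℝ :=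
  fun i => if (i : ℕ) < ℓ then 1
    else if ((i : ℕ) - ℓ) / (2*ℓ) < j then 0 else 1 / (4*(ℓ:ℝ))

/-- The committee of all candidates with index in `[ℓ, b)`. -/
def WW (b : ℕ) : Finset (Fin (4*ℓ^2 + 2*ℓ)) :=
  Finset.univ.filter fun c => ℓ ≤ (c : ℕ) ∧ (c : ℕ) < b

variable {ℓ} (hℓ : 1 ≤ ℓ)
include hℓ

lemma u_C1 (i : Fin (4*ℓ^2+ℓ)) (c : Fin (4*ℓ^2+2*ℓ)) (hc : (c : ℕ) < ℓ) :
    uu ℓ i c = if (i : ℕ) < ℓ then 1 else 0 := by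
  unfold uu
  congr 1
  simp only [eq_iff_iff]
  constructor
  · rintro (⟨h, _⟩ | ⟨h, (⟨h2, _⟩ | h2)⟩)
    · exact h
    · omega
    · have h3 : 4*ℓ^2 ≤ (c : ℕ) := h2 ▸ Nat.le_add_right _ _
      have : ℓ ≤ 4*ℓ^2 := by nlinarith
      omega
  · intro h; exact Or.inl ⟨h, hc⟩

omit hℓ in
lemma u_C2 (i : Fin (4*ℓ^2+ℓ)) (c : Fin (4*ℓ^2+2*ℓ)) (hc1 : ℓ ≤ (c : ℕ))
    (hc2 : (c : ℕ) < 4*ℓ^2) :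
    uu ℓ i c = if ℓ ≤ (i : ℕ) then 1 else 0 := by
  unfold uu
  congr 1
  simp only [eq_iff_iff]
  constructor
  · rintro (⟨_, h⟩ | ⟨h, _⟩)
    · omega
    · exact h
  · intro h; exact Or.inr ⟨h, Or.inl ⟨hc1, hc2⟩⟩

lemma u_C3 (i : Fin (4*ℓ^2+ℓ)) (c : Fin (4*ℓ^2+2*ℓ)) (j : ℕ) (hc : (c : ℕ) = 4*ℓ^2 + j) :
    uu ℓ i c = if ℓ ≤ (i : ℕ) ∧ ((i : ℕ) - ℓ) / (2*ℓ) = j then 1 else 0 := by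
  unfold uu
  congr 1
  simp only [eq_iff_iff]
  have hℓ4 : ℓ ≤ 4*ℓ^2 := by nlinarith
  constructor
  · rintro (⟨_, h⟩ | ⟨h, (⟨_, h2⟩ | h2)⟩)
    · omega
    · omega
    · refine ⟨h, ?_⟩
      have := hc ▸ h2
      omega
  · rintro ⟨h, h2⟩
    exact Or.inr ⟨h, Or.inr (by rw [hc, h2])⟩

/-- Approvers of a `C₃` candidate lie in an interval of length `2ℓ`. -/
lemma u_C3_subset (i : Fin (4*ℓ^2+ℓ)) (c : Fin (4*ℓ^2+2*ℓ)) (j : ℕ)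
    (hc : (c : ℕ) = 4*ℓ^2 + j) :
    uu ℓ i c = if ℓ + 2*ℓ*j ≤ (i : ℕ) ∧ (i : ℕ) < ℓ + 2*ℓ*j + 2*ℓ then 1 else 0 := by
  rw [u_C3 hℓ i c j hc]
  congr 1
  simp only [eq_iff_iff]
  have h2ℓ : 0 < 2*ℓ := by omega
  constructor
  · rintro ⟨h, h2⟩
    have h3 : 2*ℓ*j ≤ (i : ℕ) - ℓ := by
      have h5 := (Nat.le_div_iff_mul_le h2ℓ).1 (le_of_eq h2.symm)
      have h6 : j * (2*ℓ) = 2*ℓ*j := by ring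
      rw [h6] at h5; exact h5
    have h4 : (i : ℕ) - ℓ < 2*ℓ*j + 2*ℓ := by
      have h5 := (Nat.div_lt_iff_lt_mul h2ℓ).1 (by omega : ((i : ℕ) - ℓ) / (2*ℓ) < j + 1)
      have h6 : (j+1) * (2*ℓ) = 2*ℓ*j + 2*ℓ := by ring
      rw [h6] at h5; exact h5
    omega
  · rintro ⟨h, h2⟩
    have hi : ℓ ≤ (i : ℕ) := by omega
    refine ⟨hi, ?_⟩
    have hlt := (Nat.div_lt_iff_lt_mul h2ℓ).2
      (by rw [show (j+1) * (2*ℓ) = 2*ℓ*j + 2*ℓ from by ring]; omega :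
        (i : ℕ) - ℓ < (j+1) * (2*ℓ))
    have hge := (Nat.le_div_iff_mul_le h2ℓ).2
      (by rw [show j * (2*ℓ) = 2*ℓ*j from by ring]; omega : j * (2*ℓ) ≤ (i : ℕ) - ℓ)
    omega

/-- Division-vs-interval translation for subgroup indices. -/
lemma div_lt_iff_subidx (i j : ℕ) (h : ℓ ≤ i) :
    (i - ℓ) / (2*ℓ) < j ↔ i < ℓ + 2*ℓ*j := by
  have h2ℓ : 0 < 2*ℓ := by omega
  rw [Nat.div_lt_iff_lt_mul h2ℓ, show j * (2*ℓ) = 2*ℓ*j from by ring]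
  omega

lemma sum_u_C1 (c : Fin (4*ℓ^2+2*ℓ)) (hc : (c : ℕ) < ℓ) :
    ∑ i, uu ℓ i c = (ℓ : ℝ) := by
  rw [fin_sum_two (4*ℓ^2+ℓ) ℓ (by omega) _ 1 0
    (fun i hi => by rw [u_C1 hℓ i c hc]; simp [hi])
    (fun i hi => by rw [u_C1 hℓ i c hc]; simp [Nat.not_lt.2 hi])]
  simp

omit hℓ in
lemma sum_u_C2 (c : Fin (4*ℓ^2+2*ℓ)) (hc1 : ℓ ≤ (c : ℕ)) (hc2 : (c : ℕ) < 4*ℓ^2) :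
    ∑ i, uu ℓ i c = 4*(ℓ:ℝ)^2 := by
  rw [fin_sum_two (4*ℓ^2+ℓ) ℓ (by omega) _ 0 1
    (fun i hi => by rw [u_C2 i c hc1 hc2]; simp [Nat.not_le.2 hi])
    (fun i hi => by rw [u_C2 i c hc1 hc2]; simp [hi])]
  have : 4*ℓ^2 + ℓ - ℓ = 4*ℓ^2 := by omega
  rw [this]; push_cast; ring

lemma sum_u_C3 (c : Fin (4*ℓ^2+2*ℓ)) (j : ℕ) (hc : (c : ℕ) = 4*ℓ^2 + j) (hj : j < 2*ℓ) :
    ∑ i, uu ℓ i c = 2*(ℓ:ℝ) := by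
  have hb : ℓ + 2*ℓ*j + 2*ℓ ≤ 4*ℓ^2 + ℓ := by nlinarith
  rw [Finset.sum_congr rfl fun i _ => u_C3_subset hℓ i c j hc,
    fin_sum_ind (4*ℓ^2+ℓ) (ℓ + 2*ℓ*j) (ℓ + 2*ℓ*j + 2*ℓ) (by omega) hb 1]
  have : ℓ + 2*ℓ*j + 2*ℓ - (ℓ + 2*ℓ*j) = 2*ℓ := by omega
  rw [this]; push_cast; ring

/-- Every candidate has at most `4ℓ²` approvals. -/
lemma sum_u_le (c : Fin (4*ℓ^2+2*ℓ)) : ∑ i, uu ℓ i c ≤ 4*(ℓ:ℝ)^2 := by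
  have hsq : (ℓ:ℝ) ≤ 4*(ℓ:ℝ)^2 := by
    have : (1:ℝ) ≤ ℓ := by exact_mod_cast hℓ
    nlinarith
  rcases lt_or_ge (c : ℕ) ℓ with hc | hc
  · rw [sum_u_C1 hℓ c hc]; exact hsq
  rcases lt_or_ge (c : ℕ) (4*ℓ^2) with hc2 | hc2
  · rw [sum_u_C2 c hc hc2]
  · have hj : (c : ℕ) = 4*ℓ^2 + ((c : ℕ) - 4*ℓ^2) := by omega
    have hjlt : (c : ℕ) - 4*ℓ^2 < 2*ℓ := by have := c.isLt; omega
    rw [sum_u_C3 hℓ c _ hj hjlt]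
    have : (1:ℝ) ≤ ℓ := by exact_mod_cast hℓ
    nlinarith

omit hℓ in
lemma bb2_nonneg (j : ℕ) (i : Fin (4*ℓ^2+ℓ)) : 0 ≤ bb2 ℓ j i := by
  unfold bb2; split_ifs <;> positivity


/-! ### Phase 1: buying the common candidates `C₂` -/

omit hℓ in
lemma WW_cost_sum (b : ℕ) (hb : b ≤ 4*ℓ^2 + 2*ℓ) :
    ∑ _c' ∈ WW ℓ b, (1:ℝ) = ((b - ℓ : ℕ) : ℝ) := by
  rw [Finset.sum_const, nsmul_eq_mul, mul_one, WW, card_filter_Ico _ _ _ hb]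

lemma step1 (m : ℕ) (hm : m < 4*ℓ^2 - ℓ) :
    BOSStep ((4*ℓ^2 + ℓ : ℕ) : ℝ) (fun _ => (1:ℝ)) (uu ℓ) (bb1 ℓ m) (WW ℓ (ℓ + m))
      ⟨ℓ + m, by omega⟩ 1 (1/(4*(ℓ:ℝ)^2)) (bb1 ℓ (m+1)) := by
  have hsq : ℓ ≤ 4*ℓ^2 := by nlinarith
  have hm' : ℓ + m < 4*ℓ^2 := by omega
  have hL1 : (1:ℝ) ≤ (ℓ:ℝ) := by exact_mod_cast hℓ
  have hpos : (0:ℝ) < 4*(ℓ:ℝ)^2 := by nlinarith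
  have hmR : (m:ℝ) + (ℓ:ℝ) < 4*(ℓ:ℝ)^2 := by exact_mod_cast (by omega : m + ℓ < 4*ℓ^2)
  set c : Fin (4*ℓ^2 + 2*ℓ) := ⟨ℓ + m, by omega⟩ with hc
  have hcv : (c : ℕ) = ℓ + m := rfl
  have huc : ∀ i : Fin (4*ℓ^2+ℓ), uu ℓ i c = if ℓ ≤ (i : ℕ) then 1 else 0 :=
    fun i => u_C2 i c (by omega) (by omega)
  refine ⟨?_, ?_, ⟨one_pos, le_refl 1, by positivity, ?_⟩, ?_, ?_⟩
  · simp only [WW, Finset.mem_filter, hcv]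
    omega
  · show (1:ℝ) ≤ _
    rw [WW_cost_sum (ℓ + m) (by omega)]
    have h1 : ℓ + m - ℓ = m := by omega
    rw [h1]
    have : ((4*ℓ^2 + ℓ : ℕ) : ℝ) = 4*(ℓ:ℝ)^2 + ℓ := by push_cast; ring
    rw [this]
    linarith
  · -- the affordability equation
    have hval : ∑ i, min (bb1 ℓ m i) (1 * uu ℓ i c * (1/(4*(ℓ:ℝ)^2)))
        = (ℓ:ℝ) * 0 + ((4*ℓ^2 + ℓ - ℓ : ℕ) : ℝ) * (1/(4*(ℓ:ℝ)^2)) := by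
      apply fin_sum_two (4*ℓ^2+ℓ) ℓ (by omega)
      · intro i hi
        rw [huc i]
        simp [Nat.not_le.2 hi, bb1, hi]
      · intro i hi
        rw [huc i]
        simp only [if_pos hi, bb1, Nat.not_lt.2 hi, if_false]
        have hble : 1/(4*(ℓ:ℝ)^2) ≤ 1 - (m:ℝ)/(4*(ℓ:ℝ)^2) := by
          rw [div_le_iff₀ hpos]
          have : ((m:ℝ)/(4*(ℓ:ℝ)^2)) * (4*(ℓ:ℝ)^2) = (m:ℝ) := by field_simp
          nlinarith [this]
        rw [one_mul, one_mul, min_eq_right hble]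
    rw [hval]
    have : 4*ℓ^2 + ℓ - ℓ = 4*ℓ^2 := by omega
    rw [this]
    push_cast
    field_simp
    ring
  · -- minimality of ρ/α = 1/(4ℓ²)
    intro c' _ _ α' ρ' haff'
    have hρ' := rho_ge (fun _ => (1:ℝ)) (uu ℓ) (bb1 ℓ m) c' α' ρ' rfl haff'
      (4*(ℓ:ℝ)^2) (sum_u_le hℓ c') hpos
    have := ratio_ge_of α' ρ' (1/(4*(ℓ:ℝ)^2)) haff'.1 haff'.2.1 hρ' (by positivity)
    simpa using this
  · -- the budget update
    intro i
    rcases lt_or_ge (i : ℕ) ℓ with hi | hi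
    · rw [huc i]
      simp [bb1, hi, Nat.not_le.2 hi]
    · rw [huc i]
      simp only [bb1, if_pos hi, Nat.not_lt.2 hi, if_false]
      rw [max_eq_right]
      · push_cast; field_simp; ring
      · have h7 : ((m:ℝ)+1)/(4*(ℓ:ℝ)^2) ≤ 1 := by
          rw [div_le_one hpos]; linarith
        have e : (m:ℝ)/(4*(ℓ:ℝ)^2) + 1/(4*(ℓ:ℝ)^2) = ((m:ℝ)+1)/(4*(ℓ:ℝ)^2) := by
          rw [← add_div]
        nlinarith [e, h7]

lemma reach1 (m : ℕ) (hm : m ≤ 4*ℓ^2 - ℓ) :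
    BOSReach ((4*ℓ^2 + ℓ : ℕ) : ℝ) (fun _ => (1:ℝ)) (uu ℓ) (bb1 ℓ m) (WW ℓ (ℓ + m)) := by
  induction m with
  | zero =>
      have h0 : (fun _ : Fin (4*ℓ^2+ℓ) => ((4*ℓ^2 + ℓ : ℕ) : ℝ) / (Fintype.card (Fin (4*ℓ^2+ℓ)) : ℝ))
          = bb1 ℓ 0 := by
        funext i
        have hne : ((4*ℓ^2 + ℓ : ℕ) : ℝ) ≠ 0 := by
          have : 0 < 4*ℓ^2 + ℓ := by positivity
          exact_mod_cast this.ne'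
        rw [Fintype.card_fin]
        rw [div_self hne]
        simp only [bb1]
        split_ifs <;> norm_num
      have hW : (∅ : Finset (Fin (4*ℓ^2+2*ℓ))) = WW ℓ (ℓ + 0) := by
        ext c'
        simp only [Finset.notMem_empty, WW, Finset.mem_filter, Finset.mem_univ, true_and,
          false_iff]
        omega
      rw [← h0, ← hW]
      exact BOSReach.init
  | succ m ih =>
      have hlt : m < 4*ℓ^2 - ℓ := by omega
      have hstep := step1 hℓ m hlt
      have hres := BOSReach.step (ih (by omega)) hstep
      have hW : insert (⟨ℓ + m, by omega⟩ : Fin (4*ℓ^2+2*ℓ)) (WW ℓ (ℓ + m))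
          = WW ℓ (ℓ + (m+1)) := by
        ext c'
        simp only [Finset.mem_insert, WW, Finset.mem_filter, Finset.mem_univ, true_and,
          Fin.ext_iff]
        omega
      rwa [hW] at hres


/-! ### Phase 2: buying the distinct candidates `C₃` -/

lemma step2 (j : ℕ) (hj : j < 2*ℓ) :
    BOSStep ((4*ℓ^2 + ℓ : ℕ) : ℝ) (fun _ => (1:ℝ)) (uu ℓ) (bb2 ℓ j) (WW ℓ (4*ℓ^2 + j))
      ⟨4*ℓ^2 + j, by omega⟩ (1/2) (1/(2*(ℓ:ℝ))) (bb2 ℓ (j+1)) := by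
  have hsq : ℓ ≤ 4*ℓ^2 := by nlinarith
  have hL1 : (1:ℝ) ≤ (ℓ:ℝ) := by exact_mod_cast hℓ
  have hLpos : (0:ℝ) < (ℓ:ℝ) := by linarith
  set c : Fin (4*ℓ^2 + 2*ℓ) := ⟨4*ℓ^2 + j, by omega⟩ with hc
  have hcv : (c : ℕ) = 4*ℓ^2 + j := rfl
  have huc : ∀ i : Fin (4*ℓ^2+ℓ),
      uu ℓ i c = if ℓ + 2*ℓ*j ≤ (i : ℕ) ∧ (i : ℕ) < ℓ + 2*ℓ*j + 2*ℓ then 1 else 0 :=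
    fun i => u_C3_subset hℓ i c j hcv
  have hucq : ∀ i : Fin (4*ℓ^2+ℓ),
      uu ℓ i c = if ℓ ≤ (i : ℕ) ∧ ((i : ℕ) - ℓ) / (2*ℓ) = j then 1 else 0 :=
    fun i => u_C3 hℓ i c j hcv
  have hcM : ℓ + 2*ℓ*j + 2*ℓ ≤ 4*ℓ^2 + ℓ := by nlinarith
  refine ⟨?_, ?_, ⟨by norm_num, by norm_num, by positivity, ?_⟩, ?_, ?_⟩
  · simp only [WW, Finset.mem_filter, hcv]
    omega
  · show (1:ℝ) ≤ _
    rw [WW_cost_sum (4*ℓ^2 + j) (by omega)]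
    have h1 : (4*ℓ^2 + j - ℓ) + 1 ≤ 4*ℓ^2 + ℓ := by omega
    have h2 : ((4*ℓ^2 + j - ℓ : ℕ) : ℝ) + 1 ≤ ((4*ℓ^2 + ℓ : ℕ) : ℝ) := by exact_mod_cast h1
    linarith
  · -- the affordability equation
    have hval : ∑ i, min (bb2 ℓ j i) ((1/2) * uu ℓ i c * (1/(2*(ℓ:ℝ))))
        = (ℓ:ℝ) * 0 + (((ℓ + 2*ℓ*j) - ℓ : ℕ) : ℝ) * 0
          + (((ℓ + 2*ℓ*j + 2*ℓ) - (ℓ + 2*ℓ*j) : ℕ) : ℝ) * (1/(4*(ℓ:ℝ)))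
          + ((4*ℓ^2 + ℓ - (ℓ + 2*ℓ*j + 2*ℓ) : ℕ) : ℝ) * 0 := by
      apply fin_sum_four (4*ℓ^2+ℓ) ℓ (ℓ + 2*ℓ*j) (ℓ + 2*ℓ*j + 2*ℓ) (by omega) (by omega) hcM
      · intro i hi
        rw [huc i, if_neg (by omega)]
        simp [bb2, hi]
      · intro i hi1 hi2
        rw [huc i, if_neg (by omega)]
        have hdiv : ((i : ℕ) - ℓ) / (2*ℓ) < j := (div_lt_iff_subidx hℓ _ j hi1).2 hi2
        simp [bb2, Nat.not_lt.2 hi1, hdiv]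
      · intro i hi1 hi2
        have hiℓ : ℓ ≤ (i : ℕ) := by omega
        rw [huc i, if_pos ⟨hi1, hi2⟩]
        have hdiv : ¬ (((i : ℕ) - ℓ) / (2*ℓ) < j) := by
          rw [div_lt_iff_subidx hℓ _ j hiℓ]
          omega
        simp only [bb2, Nat.not_lt.2 hiℓ, if_false, hdiv]
        have he : (1/2 : ℝ) * 1 * (1/(2*(ℓ:ℝ))) = 1/(4*(ℓ:ℝ)) := by
          field_simp; ring
        rw [he, min_self]
      · intro i hi
        have hiℓ : ℓ ≤ (i : ℕ) := by omega
        rw [huc i, if_neg (by omega)]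
        have hdiv : ¬ (((i : ℕ) - ℓ) / (2*ℓ) < j) := by
          rw [div_lt_iff_subidx hℓ _ j hiℓ]
          omega
        simp only [bb2, Nat.not_lt.2 hiℓ, if_false, hdiv]
        rw [mul_zero, zero_mul, min_eq_right (by positivity)]
    rw [hval]
    have h3 : (ℓ + 2*ℓ*j + 2*ℓ) - (ℓ + 2*ℓ*j) = 2*ℓ := by omega
    rw [h3]
    push_cast
    field_simp
    ring
  · -- minimality of ρ/α = 1/ℓ
    intro c' hc' _ α' ρ' haff'
    have hrat : (1/(2*(ℓ:ℝ)))/((1:ℝ)/2) = 1/(ℓ:ℝ) := by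
      field_simp
    rw [hrat]
    simp only [WW, Finset.mem_filter, Finset.mem_univ, true_and, not_and, not_lt] at hc'
    rcases Nat.lt_or_ge (c' : ℕ) ℓ with hlt | hge
    · have hsum := sum_u_C1 hℓ c' hlt
      have hρ' := rho_ge (fun _ => (1:ℝ)) (uu ℓ) (bb2 ℓ j) c' α' ρ' rfl haff'
        (ℓ:ℝ) (le_of_eq hsum) hLpos
      exact ratio_ge_of α' ρ' (1/(ℓ:ℝ)) haff'.1 haff'.2.1 hρ' (by positivity)
    · have hge' : 4*ℓ^2 + j ≤ (c' : ℕ) := hc' hge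
      set j' : ℕ := (c' : ℕ) - 4*ℓ^2 with hj'def
      have hc'' : (c' : ℕ) = 4*ℓ^2 + j' := by omega
      have hj'lt : j' < 2*ℓ := by have := c'.isLt; omega
      have hsum := sum_u_C3 hℓ c' j' hc'' hj'lt
      have hρ' : 1/(2*(ℓ:ℝ)) ≤ ρ' :=
        rho_ge (fun _ => (1:ℝ)) (uu ℓ) (bb2 ℓ j) c' α' ρ' rfl haff'
          (2*(ℓ:ℝ)) (le_of_eq hsum) (by linarith)
      have hint : ∀ i : Fin (4*ℓ^2+ℓ),
          uu ℓ i c' = if ℓ + 2*ℓ*j' ≤ (i : ℕ) ∧ (i : ℕ) < ℓ + 2*ℓ*j' + 2*ℓ then 1 else 0 :=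
        fun i => u_C3_subset hℓ i c' j' hc''
      have hα' : α' ≤ 1/2 := by
        refine alpha_le (fun _ => (1:ℝ)) (uu ℓ) (bb2 ℓ j) c' α' ρ' rfl haff'
          (fun i => if ℓ + 2*ℓ*j' ≤ (i : ℕ) ∧ (i : ℕ) < ℓ + 2*ℓ*j' + 2*ℓ
            then 1/(4*(ℓ:ℝ)) else 0) ?_ (1/2) ?_
        · intro i
          by_cases h : ℓ + 2*ℓ*j' ≤ (i : ℕ) ∧ (i : ℕ) < ℓ + 2*ℓ*j' + 2*ℓ
          · simp only [if_pos h]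
            refine le_trans (min_le_left _ _) ?_
            have hiℓ : ℓ ≤ (i : ℕ) := by omega
            simp only [bb2, Nat.not_lt.2 hiℓ, if_false]
            split_ifs
            · positivity
            · exact le_rfl
          · simp only [if_neg h]
            rw [hint i, if_neg h]
            rw [mul_zero, zero_mul]
            exact le_of_eq (min_eq_right (bb2_nonneg j i))
        · have hb2 : ℓ + 2*ℓ*j' + 2*ℓ ≤ 4*ℓ^2 + ℓ := by nlinarith
          rw [fin_sum_ind (4*ℓ^2+ℓ) (ℓ + 2*ℓ*j') (ℓ + 2*ℓ*j' + 2*ℓ) (by omega) hb2]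
          have h3 : (ℓ + 2*ℓ*j' + 2*ℓ) - (ℓ + 2*ℓ*j') = 2*ℓ := by omega
          rw [h3]
          push_cast
          rw [mul_one_div]
          rw [div_le_div_iff₀ (by positivity) (by norm_num)]
          ring_nf
          linarith
      have hhalf : (1/(ℓ:ℝ))/2 = 1/(2*(ℓ:ℝ)) := by ring
      exact ratio_ge_of' α' ρ' (1/(ℓ:ℝ)) haff'.1 hα'
        (by rw [hhalf]; exact hρ') (by positivity)
  · -- the budget update
    intro i
    rcases lt_or_ge (i : ℕ) ℓ with hi | hi
    · rw [hucq i, if_neg (by omega)]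
      simp [bb2, hi]
    · rcases lt_trichotomy (((i : ℕ) - ℓ) / (2*ℓ)) j with hq | hq | hq
      · rw [hucq i, if_neg (by omega)]
        simp only [bb2, Nat.not_lt.2 hi, if_false, hq, if_pos, mul_zero, zero_mul, sub_zero]
        norm_num
        omega
      · rw [hucq i, if_pos ⟨hi, hq⟩]
        simp only [bb2, Nat.not_lt.2 hi, if_false]
        rw [if_pos (by omega), if_neg (by omega)]
        rw [max_eq_left]
        have h14 : (1:ℝ)/(4*(ℓ:ℝ)) ≤ 1/(2*(ℓ:ℝ)) :=
          one_div_le_one_div_of_le (by linarith) (by linarith)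
        linarith
      · rw [hucq i, if_neg (by omega)]
        simp only [bb2, Nat.not_lt.2 hi, if_false]
        rw [if_neg (by omega), if_neg (by omega)]
        rw [zero_mul, sub_zero, max_eq_right (by positivity)]

lemma reach2 (j : ℕ) (hj : j ≤ 2*ℓ) :
    BOSReach ((4*ℓ^2 + ℓ : ℕ) : ℝ) (fun _ => (1:ℝ)) (uu ℓ) (bb2 ℓ j) (WW ℓ (4*ℓ^2 + j)) := by
  have hsq : ℓ ≤ 4*ℓ^2 := by nlinarith
  have hL1 : (1:ℝ) ≤ (ℓ:ℝ) := by exact_mod_cast hℓ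
  induction j with
  | zero =>
      have hb : bb1 ℓ (4*ℓ^2 - ℓ) = bb2 ℓ 0 := by
        funext i
        simp only [bb1, bb2, Nat.not_lt_zero, if_false]
        by_cases hi : (i : ℕ) < ℓ
        · rw [if_pos hi, if_pos hi]
        · rw [if_neg hi, if_neg hi]
          have hcast : ((4*ℓ^2 - ℓ : ℕ) : ℝ) = 4*(ℓ:ℝ)^2 - ℓ := by
            rw [Nat.cast_sub hsq]; push_cast; ring
          rw [hcast]
          have : (0:ℝ) < 4*(ℓ:ℝ)^2 := by nlinarith
          field_simp
          ring
      have hW : WW ℓ (ℓ + (4*ℓ^2 - ℓ)) = WW ℓ (4*ℓ^2 + 0) := by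
        congr 1
        omega
      have := reach1 hℓ (4*ℓ^2 - ℓ) le_rfl
      rwa [hb, hW] at this
  | succ j ih =>
      have hlt : j < 2*ℓ := by omega
      have hstep := step2 hℓ j hlt
      have hres := BOSReach.step (ih (by omega)) hstep
      have hW : insert (⟨4*ℓ^2 + j, by omega⟩ : Fin (4*ℓ^2+2*ℓ)) (WW ℓ (4*ℓ^2 + j))
          = WW ℓ (4*ℓ^2 + (j+1)) := by
        ext c'
        simp only [Finset.mem_insert, WW, Finset.mem_filter, Finset.mem_univ, true_and,
          Fin.ext_iff]
        omega
      rwa [hW] at hres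

/-- The final committee: all of `C₂ ∪ C₃`, none of `C₁`. -/
lemma final_outcome :
    BOSOutcome ((4*ℓ^2 + ℓ : ℕ) : ℝ) (fun _ => (1:ℝ)) (uu ℓ) (WW ℓ (4*ℓ^2 + 2*ℓ)) := by
  refine ⟨bb2 ℓ (2*ℓ), reach2 hℓ (2*ℓ) le_rfl, ?_⟩
  intro c α ρ b' hstep
  have hcost := hstep.2.1
  rw [WW_cost_sum (4*ℓ^2 + 2*ℓ) le_rfl] at hcost
  have h1 : 4*ℓ^2 + 2*ℓ - ℓ = 4*ℓ^2 + ℓ := by omega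
  rw [h1] at hcost
  simp only [sub_self] at hcost
  norm_num at hcost

end BOSneg




/-- Lower-bound instance for BOS (Proposition negEJRbos): with `n = 4ℓ² + ℓ` voters,
budget `k = 4ℓ² + ℓ`, unit-cost candidates and approval (cost) utilities, where the
`ℓ` voters of group `V₁` all approve the `ℓ` candidates of `C₁`, and the remaining
`4ℓ²` voters approve the `4ℓ² - ℓ` common candidates of `C₂` plus, per subgroup of
size `2ℓ`, one distinct candidate of `C₃`: the group `V₁` deserves
`ℓ = ⌈(k-ℓ)/(4ℓ)⌉` candidates in the EJR sense (`|V₁| ≥ ℓ·n/k`), yet some valid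
execution of BOS outputs a committee containing no candidate from `C₁`. -/
theorem bos_ejr_lower_bound (ℓ : ℕ) (hℓ : 1 ≤ ℓ) :
    (((Finset.univ.filter fun i : Fin (4*ℓ^2 + ℓ) => (i : ℕ) < ℓ).card : ℝ) ≥
        (ℓ : ℝ) * (4*ℓ^2 + ℓ : ℕ) / (4*ℓ^2 + ℓ : ℕ)) ∧
    ((ℓ : ℤ) = ⌈(((4*ℓ^2 + ℓ : ℕ) : ℝ) - ℓ) / (4 * ℓ)⌉) ∧
    (∃ W : Finset (Fin (4*ℓ^2 + 2*ℓ)),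
      BOSOutcome ((4*ℓ^2 + ℓ : ℕ) : ℝ) (fun _ => (1 : ℝ))
        (fun (i : Fin (4*ℓ^2 + ℓ)) (c : Fin (4*ℓ^2 + 2*ℓ)) =>
          if ((i : ℕ) < ℓ ∧ (c : ℕ) < ℓ) ∨
             (ℓ ≤ (i : ℕ) ∧ ((ℓ ≤ (c : ℕ) ∧ (c : ℕ) < 4*ℓ^2) ∨
               (c : ℕ) = 4*ℓ^2 + ((i : ℕ) - ℓ) / (2*ℓ)))
          then (1 : ℝ) else 0)
        W ∧
      ∀ c ∈ W, ℓ ≤ (c : ℕ)) := by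
  have hNpos : (0:ℝ) < ((4*ℓ^2 + ℓ : ℕ) : ℝ) := by
    have : 0 < 4*ℓ^2 + ℓ := by positivity
    exact_mod_cast this
  refine ⟨?_, ?_, ?_⟩
  · have hcard : (Finset.univ.filter fun i : Fin (4*ℓ^2 + ℓ) => (i : ℕ) < ℓ).card = ℓ := by
      have he : (Finset.univ.filter fun i : Fin (4*ℓ^2 + ℓ) => (i : ℕ) < ℓ)
          = (Finset.univ.filter fun i : Fin (4*ℓ^2 + ℓ) => 0 ≤ (i : ℕ) ∧ (i : ℕ) < ℓ) := by
        apply Finset.filter_congr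
        intro i _
        simp
      rw [he, BOSneg.card_filter_Ico _ _ _ (by omega), Nat.sub_zero]
    rw [hcard, mul_div_assoc, div_self hNpos.ne', mul_one]
  · have he : (((4*ℓ^2 + ℓ : ℕ) : ℝ) - ℓ) / (4 * ℓ) = (ℓ:ℝ) := by
      have hL1 : (1:ℝ) ≤ (ℓ:ℝ) := by exact_mod_cast hℓ
      push_cast
      rw [div_eq_iff (by positivity : (4*(ℓ:ℝ)) ≠ 0)]
      ring
    rw [he, Int.ceil_natCast]
  · refine ⟨BOSneg.WW ℓ (4*ℓ^2 + 2*ℓ), BOSneg.final_outcome hℓ, ?_⟩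
    intro c hc
    simp only [BOSneg.WW, Finset.mem_filter] at hc
    exact hc.2.1
end

section
/- In the tail-utilities instance — two projects A and B of cost 1 each, budget 1, 100 voters where 99 voters assign score 100 to A and 2 to B, and 1 voter assigns score 1 to A and 2 to B — the Method of Equal Shares selects project B (B is 1/200-affordable while A is only 1/100-affordable), whereas BOS Equal Shares selects project A (A is (9901/10000, 1/9901)-affordable with ratio ρ/α = 10000/9901², smaller than B's ratio 1/200). -/
/-! Method of Equal Shares (MES) and BOS Equal Shares frameworks. -/

def affordableMES {V C : Type*} [Fintype V] (cost : C → ℝ) (u : V → C → ℝ)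
    (b : V → ℝ) (c : C) (ρ : ℝ) : Prop :=
  0 < ρ ∧ cost c = ∑ i : V, min (b i) (u i c * ρ)

def MESStep {V C : Type*} [Fintype V] [DecidableEq C] (cost : C → ℝ)
    (u : V → C → ℝ) (b : V → ℝ) (W : Finset C) (c : C) (ρ : ℝ) (b' : V → ℝ) : Prop :=
  c ∉ W ∧ affordableMES cost u b c ρ ∧
    (∀ c' ∉ W, ∀ ρ', affordableMES cost u b c' ρ' → ρ ≤ ρ') ∧
    (∀ i, b' i = b i - min (b i) (u i c * ρ))

inductive MESReach {V C : Type*} [Fintype V] [DecidableEq C] (budget : ℝ) (cost : C → ℝ)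
    (u : V → C → ℝ) : (V → ℝ) → Finset C → Prop
  | init : MESReach budget cost u (fun _ => budget / (Fintype.card V : ℝ)) ∅
  | step {b : V → ℝ} {W : Finset C} {c : C} {ρ : ℝ} {b' : V → ℝ} :
      MESReach budget cost u b W → MESStep cost u b W c ρ b' →
      MESReach budget cost u b' (insert c W)

def MESOutcome {V C : Type*} [Fintype V] [DecidableEq C] (budget : ℝ) (cost : C → ℝ)
    (u : V → C → ℝ) (W : Finset C) : Prop :=
  ∃ b : V → ℝ, MESReach budget cost u b W ∧
    ∀ (c : C) (ρ : ℝ) (b' : V → ℝ), ¬ MESStep cost u b W c ρ b'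

noncomputable def costT : Fin 2 → ℝ := fun _ => 1
noncomputable def uT : Fin 100 → Fin 2 → ℝ := fun i c =>
  if c = 0 then (if (i : ℕ) < 99 then 100 else 1) else 2
noncomputable def bT : Fin 100 → ℝ := fun _ => 1 / 100

lemma sum_split (g : ℝ → ℝ) :
    ∑ i : Fin 100, g (if (i : ℕ) < 99 then (100 : ℝ) else 1) = 99 * g 100 + g 1 := by
  rw [Fin.sum_univ_castSucc]
  have h1 : ∀ i : Fin 99, ((i.castSucc : Fin 100) : ℕ) < 99 := fun i => i.isLt
  simp only [h1, if_pos, Fin.val_last]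
  norm_num

lemma sumA (b : Fin 100 → ℝ) (hb : ∀ i, b i = 1/100) (x : ℝ) :
    ∑ i : Fin 100, min (b i) (x * uT i 0) =
      99 * min (1/100) (x * 100) + min (1/100) (x * 1) := by
  have := sum_split (fun t => min (1/100 : ℝ) (x * t))
  simp only [uT] at *
  simpa [hb] using this

lemma sumB (b : Fin 100 → ℝ) (hb : ∀ i, b i = 1/100) (x : ℝ) :
    ∑ i : Fin 100, min (b i) (x * uT i 1) = 100 * min (1/100) (x * 2) := by
  simp [uT, hb, Finset.sum_const]

lemma commA (ρ : ℝ) : ∀ i : Fin 100, min (bT i) (uT i 0 * ρ) = min (bT i) (ρ * uT i 0) := by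
  intro i; ring_nf

lemma commB (ρ : ℝ) : ∀ i : Fin 100, min (bT i) (uT i 1 * ρ) = min (bT i) (ρ * uT i 1) := by
  intro i; ring_nf

lemma mesA_afford : affordableMES costT uT bT 0 (1/100) := by
  refine ⟨by norm_num, ?_⟩
  simp only [commA]
  rw [sumA bT (fun _ => rfl)]
  norm_num [costT]

lemma mesB_afford : affordableMES costT uT bT 1 (1/200) := by
  refine ⟨by norm_num, ?_⟩
  simp only [commB]
  rw [sumB bT (fun _ => rfl)]
  norm_num [costT]

lemma mesA_lb (ρ : ℝ) (h : affordableMES costT uT bT 0 ρ) : 1/100 ≤ ρ := by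
  obtain ⟨hρ, heq⟩ := h
  simp only [commA] at heq
  rw [sumA bT (fun _ => rfl)] at heq
  have h1 : min (1/100 : ℝ) (ρ * 100) ≤ 1/100 := min_le_left _ _
  have h2 : min (1/100 : ℝ) (ρ * 1) ≤ ρ * 1 := min_le_right _ _
  simp only [costT] at heq
  linarith

lemma mesB_lb (ρ : ℝ) (h : affordableMES costT uT bT 1 ρ) : 1/200 ≤ ρ := by
  obtain ⟨hρ, heq⟩ := h
  simp only [commB] at heq
  rw [sumB bT (fun _ => rfl)] at heq
  have h2 : min (1/100 : ℝ) (ρ * 2) ≤ ρ * 2 := min_le_right _ _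
  simp only [costT] at heq
  linarith

lemma bosA_afford : affordableBOS costT uT bT 0 (9901/10000) (1/9901) := by
  refine ⟨by norm_num, by norm_num, by norm_num, ?_⟩
  have h : ∀ i : Fin 100, min (bT i) ((9901/10000 : ℝ) * uT i 0 * (1/9901)) =
      min (bT i) ((1/10000 : ℝ) * uT i 0) := by
    intro i; ring_nf
  simp only [h]
  rw [sumA bT (fun _ => rfl)]
  norm_num [costT]

lemma bosA_lb (α ρ : ℝ) (h : affordableBOS costT uT bT 0 α ρ) : 10000/9901^2 ≤ ρ / α := by
  obtain ⟨hα, hα1, hρ, heq⟩ := h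
  have h' : ∀ i : Fin 100, min (bT i) (α * uT i 0 * ρ) = min (bT i) ((α * ρ) * uT i 0) := by
    intro i; ring_nf
  simp only [h'] at heq
  rw [sumA bT (fun _ => rfl)] at heq
  simp only [costT, mul_one] at heq
  set x := α * ρ with hx
  have hxpos : 0 < x := mul_pos hα hρ
  have key : 10000 * α^2 ≤ 9901^2 * x := by
    rcases le_total (x*100) (1/100 : ℝ) with hc1 | hc1
    · rw [min_eq_right hc1, min_eq_right (by linarith : x ≤ 1/100)] at heq
      nlinarith
    · rw [min_eq_left hc1] at heq
      rcases le_total x (1/100 : ℝ) with hc2 | hc2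
      · rw [min_eq_right hc2] at heq
        nlinarith [sq_nonneg (x - 1/10000), mul_nonneg (by linarith : (0:ℝ) ≤ 10000*x - 1) (by linarith : (0:ℝ) ≤ 9801 - x)]
      · rw [min_eq_left hc2] at heq
        nlinarith
  rw [div_le_div_iff₀ (by positivity) hα]
  nlinarith [mul_pos hα hρ]

lemma bosB_lb (α ρ : ℝ) (h : affordableBOS costT uT bT 1 α ρ) : 1/200 ≤ ρ / α := by
  obtain ⟨hα, hα1, hρ, heq⟩ := h
  have h' : ∀ i : Fin 100, min (bT i) (α * uT i 1 * ρ) = min (bT i) ((α * ρ) * uT i 1) := by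
    intro i; ring_nf
  simp only [h'] at heq
  rw [sumB bT (fun _ => rfl)] at heq
  simp only [costT, mul_one] at heq
  rw [le_div_iff₀ hα]
  rcases le_total ((α*ρ)*2) (1/100 : ℝ) with hc | hc
  · rw [min_eq_right hc] at heq
    nlinarith
  · rw [min_eq_left hc] at heq
    nlinarith

lemma hval : ((1:ℝ)/9901)/((9901:ℝ)/10000) = 10000/9901^2 := by norm_num

lemma hlt : (10000:ℝ)/9901^2 < 1/200 := by norm_num

-- MES process
lemma mes_step_empty {c : Fin 2} {ρ : ℝ} {b' : Fin 100 → ℝ}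
    (h : MESStep costT uT bT ∅ c ρ b') : c = 1 ∧ b' = fun _ => 0 := by
  obtain ⟨hc, haff, hmin, hb'⟩ := h
  have hle : ρ ≤ 1/200 := hmin 1 (by simp) (1/200) mesB_afford
  fin_cases c
  · exact absurd (mesA_lb ρ haff) (by linarith)
  · refine ⟨rfl, funext fun i => ?_⟩
    have hge : 1/200 ≤ ρ := mesB_lb ρ haff
    have hρ : ρ = 1/200 := le_antisymm hle hge
    rw [hb' i, hρ]
    norm_num [uT, bT]

lemma mes_step_exists : MESStep costT uT bT ∅ 1 (1/200) (fun _ => 0) := by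
  refine ⟨by simp, mesB_afford, ?_, fun i => by norm_num [uT, bT]⟩
  intro c' _ ρ' haff
  fin_cases c'
  · have := mesA_lb ρ' haff; linarith
  · exact mesB_lb ρ' haff

lemma mes_nostep_zero {W : Finset (Fin 2)} {c : Fin 2} {ρ : ℝ} {b' : Fin 100 → ℝ} :
    ¬ MESStep costT uT (fun _ => 0) W c ρ b' := by
  rintro ⟨_, ⟨hρ, heq⟩, _, _⟩
  have hu : ∀ i : Fin 100, 0 < uT i c := by
    intro i
    simp only [uT]
    split <;> [skip; norm_num]
    split <;> norm_num
  have : ∀ i : Fin 100, min (0:ℝ) (uT i c * ρ) = 0 :=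
    fun i => min_eq_left (mul_nonneg (hu i).le hρ.le)
  simp only [this, Finset.sum_const_zero, costT] at heq
  norm_num at heq

lemma mes_reach_char {b : Fin 100 → ℝ} {W : Finset (Fin 2)}
    (h : MESReach 1 costT uT b W) :
    (W = ∅ ∧ b = bT) ∨ (W = {1} ∧ b = fun _ => 0) := by
  induction h with
  | init =>
    left
    refine ⟨rfl, funext fun i => ?_⟩
    simp [bT]
  | step hr hs ih =>
    rcases ih with ⟨rfl, rfl⟩ | ⟨rfl, rfl⟩
    · obtain ⟨rfl, rfl⟩ := mes_step_empty hs
      right; exact ⟨rfl, rfl⟩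
    · exact absurd hs mes_nostep_zero

lemma mes_main (W : Finset (Fin 2)) (h : MESOutcome 1 costT uT W) :
    (1 : Fin 2) ∈ W ∧ (0 : Fin 2) ∉ W := by
  obtain ⟨b, hreach, hnostep⟩ := h
  rcases mes_reach_char hreach with ⟨rfl, rfl⟩ | ⟨rfl, _⟩
  · exact absurd mes_step_exists (hnostep 1 (1/200) (fun _ => 0))
  · exact ⟨by simp, by simp⟩

-- BOS process
lemma bos_step_empty {c : Fin 2} {α ρ : ℝ} {b' : Fin 100 → ℝ}
    (h : BOSStep 1 costT uT bT ∅ c α ρ b') : c = 0 := by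
  obtain ⟨hc, hbud, haff, hmin, hb'⟩ := h
  fin_cases c
  · rfl
  · exfalso
    have h1 : 1/200 ≤ ρ/α := bosB_lb α ρ haff
    have h2 : ρ/α ≤ (1/9901)/(9901/10000) :=
      hmin 0 (by simp) (by simp [costT]) (9901/10000) (1/9901) bosA_afford
    rw [hval] at h2
    linarith [hlt]

lemma bos_step_exists :
    BOSStep 1 costT uT bT ∅ 0 (9901/10000) (1/9901)
      (fun i => max 0 (bT i - uT i 0 * (1/9901))) := by
  refine ⟨by simp, by simp [costT], bosA_afford, ?_, fun i => rfl⟩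
  intro c' _ _ α' ρ' haff
  rw [hval]
  fin_cases c'
  · exact bosA_lb α' ρ' haff
  · have := bosB_lb α' ρ' haff
    linarith [hlt]

lemma bos_nostep_full {b : Fin 100 → ℝ} {c : Fin 2} {α ρ : ℝ} {b' : Fin 100 → ℝ} :
    ¬ BOSStep 1 costT uT b {0} c α ρ b' := by
  rintro ⟨_, hbud, _, _, _⟩
  simp [costT] at hbud
  norm_num at hbud

lemma bos_reach_char {b : Fin 100 → ℝ} {W : Finset (Fin 2)}
    (h : BOSReach 1 costT uT b W) :
    (W = ∅ ∧ b = bT) ∨ W = {0} := by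
  induction h with
  | init =>
    left
    refine ⟨rfl, funext fun i => ?_⟩
    simp [bT]
  | step hr hs ih =>
    rcases ih with ⟨rfl, rfl⟩ | rfl
    · obtain rfl := bos_step_empty hs
      right; rfl
    · exact absurd hs bos_nostep_full

lemma bos_main (W : Finset (Fin 2)) (h : BOSOutcome 1 costT uT W) :
    (0 : Fin 2) ∈ W ∧ (1 : Fin 2) ∉ W := by
  obtain ⟨b, hreach, hnostep⟩ := h
  rcases bos_reach_char hreach with ⟨rfl, rfl⟩ | rfl
  · exact absurd bos_step_exists
      (hnostep 0 (9901/10000) (1/9901) (fun i => max 0 (bT i - uT i 0 * (1/9901))))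
  · exact ⟨by simp, by simp⟩


/-- Tail-utilities instance: two unit-cost projects `A` (index 0) and `B` (index 1),
budget `1`, 100 voters with endowments `1/100`; 99 voters assign score 100 to `A` and
2 to `B`, one voter assigns 1 to `A` and 2 to `B`. Then `A` is `1/100`-affordable and
`B` is `1/200`-affordable, and the Method of Equal Shares selects `B`; whereas under BOS,
`A` is `(9901/10000, 1/9901)`-affordable with ratio `ρ/α = 10000/9901² < 1/200`, and
BOS Equal Shares selects `A`. -/
theorem tail_utilities_mes_vs_bos :
    let cost : Fin 2 → ℝ := fun _ => 1
    let u : Fin 100 → Fin 2 → ℝ := fun i c =>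
      if c = 0 then (if (i : ℕ) < 99 then 100 else 1) else 2
    let b₀ : Fin 100 → ℝ := fun _ => 1 / 100
    affordableMES cost u b₀ 0 (1 / 100) ∧
    affordableMES cost u b₀ 1 (1 / 200) ∧
    (∀ W : Finset (Fin 2), MESOutcome (1 : ℝ) cost u W →
      (1 : Fin 2) ∈ W ∧ (0 : Fin 2) ∉ W) ∧
    affordableBOS cost u b₀ 0 (9901 / 10000) (1 / 9901) ∧
    ((1 : ℝ) / 9901) / ((9901 : ℝ) / 10000) = 10000 / 9901 ^ 2 ∧
    (10000 : ℝ) / 9901 ^ 2 < 1 / 200 ∧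
    (∀ W : Finset (Fin 2), BOSOutcome (1 : ℝ) cost u W →
      (0 : Fin 2) ∈ W ∧ (1 : Fin 2) ∉ W) := by
  intro cost u b₀
  exact ⟨mesA_afford, mesB_afford, mes_main, bosA_afford, hval, hlt, bos_main⟩
end

section
/- In the unpopular-projects instance — 310 unit-cost projects, budget 10, 1000 voters where voters v₁..v₇₀₀ approve the same ten projects A₁..A₁₀ and each of voters v₇₀₁..v₁₀₀₀ approves a single distinct project among B₁..B₃₀₀ — BOS Equal Shares selects exactly seven A-projects and three B-projects, whereas the Method of Equal Shares (without completion) selects exactly seven A-projects and no B-projects. -/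
namespace Unpop

abbrev cF : Fin 310 → ℝ := fun _ => 1

abbrev uF : Fin 1000 → Fin 310 → ℝ := fun i c =>
  if ((i : ℕ) < 700 ∧ (c : ℕ) < 10) ∨
     (700 ≤ (i : ℕ) ∧ (c : ℕ) = (i : ℕ) - 700 + 10)
  then (1 : ℝ) else 0

lemma uA_one {i : Fin 1000} {c : Fin 310} (hi : (i:ℕ) < 700) (hc : (c:ℕ) < 10) :
    uF i c = 1 := if_pos (Or.inl ⟨hi, hc⟩)

lemma uA_zero {i : Fin 1000} {c : Fin 310} (hi : 700 ≤ (i:ℕ)) (hc : (c:ℕ) < 10) :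
    uF i c = 0 := if_neg (by omega)

lemma uB_one {i : Fin 1000} {c : Fin 310} (hc : 10 ≤ (c:ℕ)) (hi : (i:ℕ) = (c:ℕ) + 690) :
    uF i c = 1 := if_pos (Or.inr ⟨by omega, by omega⟩)

lemma uB_zero {i : Fin 1000} {c : Fin 310} (hc : 10 ≤ (c:ℕ)) (hi : (i:ℕ) ≠ (c:ℕ) + 690) :
    uF i c = 0 := if_neg (by omega)

lemma sum_if_lt700 (x : ℝ) : ∑ i : Fin 1000, (if (i:ℕ) < 700 then x else 0) = 700 * x := by
  rw [Fin.sum_univ_eq_sum_range (fun m => if m < 700 then x else 0) 1000]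
  rw [Finset.range_eq_Ico,
    ← Finset.sum_Ico_consecutive _ (by norm_num : (0:ℕ) ≤ 700) (by norm_num : (700:ℕ) ≤ 1000)]
  have h1 : ∑ i ∈ Finset.Ico 0 700, (if i < 700 then x else 0) = 700 * x := by
    rw [Finset.sum_congr rfl fun i hi => if_pos (Finset.mem_Ico.mp hi).2]
    simp [mul_comm]
  have h2 : ∑ i ∈ Finset.Ico 700 1000, (if i < 700 then x else 0) = 0 := by
    rw [Finset.sum_congr rfl fun i hi => if_neg (Nat.not_lt.mpr (Finset.mem_Ico.mp hi).1)]
    simp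
  rw [h1, h2, add_zero]

lemma sum_A (b : Fin 1000 → ℝ) (c : Fin 310) (hc : (c:ℕ) < 10) (β : ℝ)
    (hb1 : ∀ i : Fin 1000, (i:ℕ) < 700 → b i = β)
    (hb2 : ∀ i : Fin 1000, 700 ≤ (i:ℕ) → 0 ≤ b i)
    (t : ℝ) :
    ∑ i : Fin 1000, min (b i) (uF i c * t) = 700 * min β t := by
  have key : ∀ i : Fin 1000, min (b i) (uF i c * t) = if (i:ℕ) < 700 then min β t else 0 := by
    intro i
    by_cases h : (i:ℕ) < 700
    · rw [uA_one h hc, one_mul, if_pos h, hb1 i h]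
    · have h7 : 700 ≤ (i:ℕ) := le_of_not_gt h
      rw [uA_zero h7 hc, zero_mul, if_neg h, min_eq_right (hb2 i h7)]
  rw [Finset.sum_congr rfl fun i _ => key i, sum_if_lt700]

lemma sum_B (b : Fin 1000 → ℝ) (c : Fin 310) (hc : 10 ≤ (c:ℕ))
    (hbnn : ∀ i : Fin 1000, 0 ≤ b i) (t : ℝ) :
    ∑ i : Fin 1000, min (b i) (uF i c * t)
      = min (b ⟨(c:ℕ)+690, by omega⟩) t := by
  set i0 : Fin 1000 := ⟨(c:ℕ)+690, by omega⟩ with hi0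
  have key : ∀ i : Fin 1000, min (b i) (uF i c * t) = if i = i0 then min (b i0) t else 0 := by
    intro i
    by_cases h : i = i0
    · subst h
      rw [uB_one hc rfl, one_mul, if_pos rfl]
    · have hne : (i:ℕ) ≠ (c:ℕ)+690 := fun hv => h (Fin.ext hv)
      rw [uB_zero hc hne, zero_mul, if_neg h, min_eq_right (hbnn i)]
  rw [Finset.sum_congr rfl fun i _ => key i,
    Finset.sum_ite_eq' Finset.univ i0 (fun _ => min (b i0) t)]
  simp

lemma existsA {W : Finset (Fin 310)}
    (h : (W.filter fun c : Fin 310 => (c:ℕ) < 10).card < 10) :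
    ∃ c : Fin 310, (c:ℕ) < 10 ∧ c ∉ W := by
  by_contra hcon
  push_neg at hcon
  have hle : (Finset.univ : Finset (Fin 10)).card ≤
      (W.filter fun c : Fin 310 => (c:ℕ) < 10).card := by
    apply Finset.card_le_card_of_injOn (fun j : Fin 10 => (⟨(j:ℕ), by omega⟩ : Fin 310))
    · intro j _
      simp only [Finset.mem_coe, Finset.mem_filter]
      exact ⟨hcon _ j.isLt, j.isLt⟩
    · intro a _ b _ hab
      simp only [Fin.mk.injEq] at hab
      exact Fin.ext hab
  rw [Finset.card_univ, Fintype.card_fin] at hle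
  omega

lemma existsB {W : Finset (Fin 310)}
    (h : (W.filter fun c : Fin 310 => 10 ≤ (c:ℕ)).card < 300) :
    ∃ c : Fin 310, 10 ≤ (c:ℕ) ∧ c ∉ W := by
  by_contra hcon
  push_neg at hcon
  have hle : (Finset.univ : Finset (Fin 300)).card ≤
      (W.filter fun c : Fin 310 => 10 ≤ (c:ℕ)).card := by
    apply Finset.card_le_card_of_injOn (fun j : Fin 300 => (⟨(j:ℕ)+10, by omega⟩ : Fin 310))
    · intro j _
      simp only [Finset.mem_coe, Finset.mem_filter]
      exact ⟨hcon _ (Nat.le_add_left 10 j), Nat.le_add_left 10 j⟩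
    · intro a _ b _ hab
      simp only [Fin.mk.injEq] at hab
      exact Fin.ext (by omega)
  rw [Finset.card_univ, Fintype.card_fin] at hle
  omega

/-! ### MES analysis -/

structure InvM (W : Finset (Fin 310)) (b : Fin 1000 → ℝ) (k : ℕ) : Prop where
  hk : k ≤ 7
  hWA : ∀ c ∈ W, (c:ℕ) < 10
  hcard : W.card = k
  hbA : ∀ i : Fin 1000, (i:ℕ) < 700 → b i = (7 - (k:ℝ))/700
  hbB : ∀ i : Fin 1000, 700 ≤ (i:ℕ) → b i = 1/100

lemma InvM.nn {W b k} (inv : InvM W b k) : ∀ i : Fin 1000, 0 ≤ b i := by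
  intro i
  have hk : (k:ℝ) ≤ 7 := by exact_mod_cast inv.hk
  by_cases hi : (i:ℕ) < 700
  · rw [inv.hbA i hi]
    have h0 : (0:ℝ) ≤ 7 - (k:ℝ) := by linarith
    positivity
  · rw [inv.hbB i (le_of_not_gt hi)]; norm_num

lemma mes_B_unaffordable {W b k} (inv : InvM W b k) {c : Fin 310} (hc : 10 ≤ (c:ℕ))
    {ρ : ℝ} (h : affordableMES cF uF b c ρ) : False := by
  obtain ⟨hρ, heq⟩ := h
  rw [sum_B b c hc inv.nn ρ] at heq
  have hb0 : b ⟨(c:ℕ)+690, by omega⟩ = 1/100 :=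
    inv.hbB _ (by show 700 ≤ (c:ℕ)+690; omega)
  rw [hb0] at heq
  have h1 : (1:ℝ) = min (1/100) ρ := heq
  have h2 := min_le_left (1/100:ℝ) ρ
  linarith

lemma mes_A_aff {W b k} (inv : InvM W b k) {c : Fin 310} (hc : (c:ℕ) < 10)
    {ρ : ℝ} (h : affordableMES cF uF b c ρ) :
    k ≤ 6 ∧ min ((7 - (k:ℝ))/700) ρ = 1/700 := by
  obtain ⟨hρ, heq⟩ := h
  rw [sum_A b c hc _ inv.hbA (fun i hi => by rw [inv.hbB i hi]; norm_num) ρ] at heq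
  have h1 : (1:ℝ) = 700 * min ((7 - (k:ℝ))/700) ρ := heq
  have hk6 : k ≤ 6 := by
    by_contra hcon
    have hk7 : k = 7 := by have := inv.hk; omega
    have hz : ((7:ℝ) - ((7:ℕ):ℝ))/700 = 0 := by norm_num
    rw [hk7, hz, min_eq_left hρ.le] at h1
    norm_num at h1
  exact ⟨hk6, by linarith⟩

lemma mes_A_aff_wit {W b k} (inv : InvM W b k) (hk : k ≤ 6) {c : Fin 310}
    (hc : (c:ℕ) < 10) : affordableMES cF uF b c (1/700) := by
  refine ⟨by norm_num, ?_⟩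
  rw [sum_A b c hc _ inv.hbA (fun i hi => by rw [inv.hbB i hi]; norm_num) (1/700)]
  have hk' : (k:ℝ) ≤ 6 := by exact_mod_cast hk
  rw [min_eq_right (by linarith : (1:ℝ)/700 ≤ (7 - (k:ℝ))/700)]
  show (1:ℝ) = 700 * (1/700)
  norm_num

lemma invM_step {b W k} {c : Fin 310} {ρ : ℝ} {b' : Fin 1000 → ℝ} (inv : InvM W b k)
    (hs : MESStep cF uF b W c ρ b') : InvM (insert c W) b' (k+1) := by
  obtain ⟨hcW, haff, hminim, hb'⟩ := hs
  rcases lt_or_ge ((c:ℕ)) 10 with hc | hc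
  · obtain ⟨hk6, hmin⟩ := mes_A_aff inv hc haff
    refine ⟨by omega, ?_, ?_, ?_, ?_⟩
    · intro c' hc'
      rcases Finset.mem_insert.mp hc' with h | h
      · exact h ▸ hc
      · exact inv.hWA c' h
    · rw [Finset.card_insert_of_notMem hcW, inv.hcard]
    · intro i hi
      rw [hb' i, uA_one hi hc, one_mul, inv.hbA i hi, hmin]
      push_cast
      ring
    · intro i hi
      rw [hb' i, uA_zero hi hc, zero_mul, inv.hbB i hi,
        min_eq_right (by norm_num : (0:ℝ) ≤ 1/100)]
      norm_num
  · exact (mes_B_unaffordable inv hc haff).elim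

lemma mes_reach_inv {b W} (h : MESReach 10 cF uF b W) : ∃ k, InvM W b k := by
  induction h with
  | init =>
      refine ⟨0, ⟨by norm_num, fun c hc => absurd hc (Finset.notMem_empty c), rfl, ?_, ?_⟩⟩
      all_goals
        intro i hi
        show (10:ℝ)/((Fintype.card (Fin 1000) : ℕ):ℝ) = _
        rw [Fintype.card_fin]
        norm_num
  | step hr hs ih =>
      obtain ⟨k, inv⟩ := ih
      exact ⟨k+1, invM_step inv hs⟩

lemma mes_step_exists {W b k} (inv : InvM W b k) (hk : k ≤ 6) :
    ∃ c ρ b', MESStep cF uF b W c ρ b' := by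
  have hfilt : (W.filter fun c : Fin 310 => (c:ℕ) < 10) = W :=
    Finset.filter_true_of_mem inv.hWA
  obtain ⟨c0, hc0, hc0W⟩ := existsA (by rw [hfilt, inv.hcard]; omega)
  refine ⟨c0, 1/700, fun i => b i - min (b i) (uF i c0 * (1/700)),
    hc0W, mes_A_aff_wit inv hk hc0, ?_, fun i => rfl⟩
  intro c' hc'W ρ' haff'
  rcases lt_or_ge ((c':ℕ)) 10 with hc' | hc'
  · have h1 := (mes_A_aff inv hc' haff').2
    have h2 := min_le_right ((7 - (k:ℝ))/700) ρ'
    linarith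
  · exact (mes_B_unaffordable inv hc' haff').elim

lemma mesMain (W : Finset (Fin 310)) (h : MESOutcome 10 cF uF W) :
    (W.filter fun c : Fin 310 => (c:ℕ) < 10).card = 7 ∧
    (W.filter fun c : Fin 310 => 10 ≤ (c:ℕ)).card = 0 := by
  obtain ⟨b, hreach, hnostep⟩ := h
  obtain ⟨k, inv⟩ := mes_reach_inv hreach
  have hk7 : k = 7 := by
    rcases Nat.lt_or_ge k 7 with h7 | h7
    · obtain ⟨c, ρ, b', hs⟩ := mes_step_exists inv (by omega)
      exact absurd hs (hnostep c ρ b')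
    · have := inv.hk; omega
  subst hk7
  constructor
  · rw [Finset.filter_true_of_mem inv.hWA, inv.hcard]
  · rw [Finset.card_eq_zero, Finset.filter_eq_empty_iff]
    intro c hc
    exact not_le.mpr (inv.hWA c hc)

/-! ### BOS analysis -/

structure InvB (W : Finset (Fin 310)) (b : Fin 1000 → ℝ) (kA kB : ℕ) : Prop where
  hkA : kA ≤ 7
  hkB : kB ≤ 3
  hdisj : kB = 0 ∨ kA = 7
  hfA : (W.filter fun c : Fin 310 => (c:ℕ) < 10).card = kA
  hfB : (W.filter fun c : Fin 310 => 10 ≤ (c:ℕ)).card = kB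
  hcard : W.card = kA + kB
  hbA : ∀ i : Fin 1000, (i:ℕ) < 700 → b i = (7 - (kA:ℝ))/700
  hbnn : ∀ i : Fin 1000, 700 ≤ (i:ℕ) → 0 ≤ b i
  hbB : ∀ c : Fin 310, 10 ≤ (c:ℕ) → c ∉ W →
    ∀ i : Fin 1000, (i:ℕ) = (c:ℕ)+690 → b i = 1/100

lemma InvB.nn {W b kA kB} (inv : InvB W b kA kB) : ∀ i : Fin 1000, 0 ≤ b i := by
  intro i
  have hk : (kA:ℝ) ≤ 7 := by exact_mod_cast inv.hkA
  by_cases hi : (i:ℕ) < 700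
  · rw [inv.hbA i hi]
    have h0 : (0:ℝ) ≤ 7 - (kA:ℝ) := by linarith
    positivity
  · exact inv.hbnn i (le_of_not_gt hi)

lemma sum_cost (W : Finset (Fin 310)) : ∑ c' ∈ W, cF c' = (W.card : ℝ) := by
  simp

lemma sum_conv (b : Fin 1000 → ℝ) (c : Fin 310) (α ρ : ℝ) :
    ∑ i : Fin 1000, min (b i) (α * uF i c * ρ)
      = ∑ i : Fin 1000, min (b i) (uF i c * (α * ρ)) :=
  Finset.sum_congr rfl (fun i _ => congrArg (min (b i)) (by ring))

lemma bosA_facts {W b kA kB} (inv : InvB W b kA kB) {c : Fin 310} {α ρ : ℝ}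
    (hc : (c:ℕ) < 10) (h : affordableBOS cF uF b c α ρ) :
    kA ≤ 6 ∧ 1/700 ≤ ρ/α ∧ (ρ/α ≤ 1/700 → ρ = 1/700) := by
  obtain ⟨hα, hα1, hρ, heq⟩ := h
  rw [sum_conv, sum_A b c hc _ inv.hbA (fun i hi => inv.hbnn i hi) (α*ρ)] at heq
  have h1 : α * 1 = 700 * min ((7 - (kA:ℝ))/700) (α*ρ) := heq
  rw [mul_one] at h1
  have hk6 : kA ≤ 6 := by
    by_contra hcon
    have hk7 : kA = 7 := by have := inv.hkA; omega
    have hz : ((7:ℝ) - ((7:ℕ):ℝ))/700 = 0 := by norm_num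
    rw [hk7, hz, min_eq_left (by positivity : (0:ℝ) ≤ α * ρ)] at h1
    linarith
  have h2 : α ≤ 700 * (α * ρ) := by
    have := min_le_right ((7 - (kA:ℝ))/700) (α*ρ)
    linarith
  have hρ700 : 1/700 ≤ ρ := by nlinarith
  refine ⟨hk6, ?_, ?_⟩
  · rw [le_div_iff₀ hα]
    nlinarith
  · intro hr
    have := (div_le_iff₀ hα).1 hr
    have hα' : 1/700 * α ≤ 1/700 := by linarith
    linarith

lemma bosB_facts {W b kA kB} (inv : InvB W b kA kB) {c : Fin 310} {α ρ : ℝ}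
    (hc : 10 ≤ (c:ℕ)) (hcW : c ∉ W) (h : affordableBOS cF uF b c α ρ) :
    1 ≤ ρ ∧ 100 ≤ ρ/α := by
  obtain ⟨hα, hα1, hρ, heq⟩ := h
  rw [sum_conv, sum_B b c hc inv.nn (α*ρ)] at heq
  have hb0 : b ⟨(c:ℕ)+690, by omega⟩ = 1/100 := inv.hbB c hc hcW _ rfl
  rw [hb0] at heq
  have h1 : α * 1 = min (1/100) (α*ρ) := heq
  rw [mul_one] at h1
  have hle : α ≤ 1/100 := by
    have := min_le_left (1/100:ℝ) (α*ρ); linarith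
  have hle2 : α ≤ α*ρ := by
    have := min_le_right (1/100:ℝ) (α*ρ); linarith
  have hρ1 : 1 ≤ ρ := by nlinarith
  refine ⟨hρ1, ?_⟩
  rw [le_div_iff₀ hα]
  linarith

lemma bosA_wit {W b kA kB} (inv : InvB W b kA kB) (hkA : kA ≤ 6) {c : Fin 310}
    (hc : (c:ℕ) < 10) : affordableBOS cF uF b c 1 (1/700) := by
  refine ⟨one_pos, le_refl 1, by norm_num, ?_⟩
  rw [sum_conv, sum_A b c hc _ inv.hbA (fun i hi => inv.hbnn i hi) (1*(1/700))]
  have hk' : (kA:ℝ) ≤ 6 := by exact_mod_cast hkA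
  rw [min_eq_right (by linarith : (1:ℝ)*(1/700) ≤ (7 - (kA:ℝ))/700)]
  show (1:ℝ) * 1 = 700 * (1*(1/700))
  norm_num

lemma bosB_wit {W b kA kB} (inv : InvB W b kA kB) {c : Fin 310}
    (hc : 10 ≤ (c:ℕ)) (hcW : c ∉ W) : affordableBOS cF uF b c (1/100) 1 := by
  refine ⟨by norm_num, by norm_num, one_pos, ?_⟩
  rw [sum_conv, sum_B b c hc inv.nn ((1/100)*1)]
  have hb0 : b ⟨(c:ℕ)+690, by omega⟩ = 1/100 := inv.hbB c hc hcW _ rfl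
  rw [hb0]
  show (1:ℝ)/100 * 1 = min (1/100) ((1/100)*1)
  norm_num

lemma bos_budget {W : Finset (Fin 310)} {kA kB : ℕ} (hW : W.card = kA + kB)
    (h : kA + kB ≤ 9) {c : Fin 310} : cF c ≤ 10 - ∑ c' ∈ W, cF c' := by
  rw [sum_cost, hW]
  show (1:ℝ) ≤ 10 - ((kA + kB : ℕ):ℝ)
  have : ((kA + kB : ℕ):ℝ) ≤ 9 := by exact_mod_cast h
  linarith

lemma bos_step_exists_A {W b kA} (inv : InvB W b kA 0) (hkA : kA ≤ 6) :
    ∃ c α ρ b', BOSStep 10 cF uF b W c α ρ b' := by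
  obtain ⟨c0, hc0, hc0W⟩ := existsA (by rw [inv.hfA]; omega)
  refine ⟨c0, 1, 1/700, fun i => max 0 (b i - uF i c0 * (1/700)), hc0W,
    bos_budget inv.hcard (by omega), bosA_wit inv hkA hc0, ?_, fun i => rfl⟩
  intro c' hc'W hbud α' ρ' haff'
  have hr : (1:ℝ)/700 / 1 = 1/700 := by norm_num
  rw [hr]
  rcases lt_or_ge ((c':ℕ)) 10 with hc' | hc'
  · exact (bosA_facts inv hc' haff').2.1
  · have := (bosB_facts inv hc' hc'W haff').2
    linarith

lemma bos_step_exists_B {W b kB} (inv : InvB W b 7 kB) (hkB : kB ≤ 2) :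
    ∃ c α ρ b', BOSStep 10 cF uF b W c α ρ b' := by
  obtain ⟨c0, hc0, hc0W⟩ := existsB (by rw [inv.hfB]; omega)
  refine ⟨c0, 1/100, 1, fun i => max 0 (b i - uF i c0 * 1), hc0W,
    bos_budget inv.hcard (by omega), bosB_wit inv hc0 hc0W, ?_, fun i => rfl⟩
  intro c' hc'W hbud α' ρ' haff'
  have hr : (1:ℝ) / (1/100) = 100 := by norm_num
  rw [hr]
  rcases lt_or_ge ((c':ℕ)) 10 with hc' | hc'
  · exact absurd (bosA_facts inv hc' haff').1 (by omega)
  · exact (bosB_facts inv hc' hc'W haff').2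

lemma invB_step {b W kA kB} {c : Fin 310} {α ρ : ℝ} {b' : Fin 1000 → ℝ}
    (inv : InvB W b kA kB) (hs : BOSStep 10 cF uF b W c α ρ b') :
    ∃ kA' kB', InvB (insert c W) b' kA' kB' := by
  obtain ⟨hcW, hbud, haff, hminim, hb'⟩ := hs
  have hbudR : kA + kB ≤ 9 := by
    have h1 : (1:ℝ) ≤ 10 - ((kA + kB : ℕ):ℝ) := by
      have := hbud
      rw [sum_cost, inv.hcard] at this
      exact this
    by_contra hcon
    push_neg at hcon
    have h2 : (10:ℝ) ≤ ((kA + kB : ℕ):ℝ) := by exact_mod_cast hcon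
    linarith
  rcases lt_or_ge ((c:ℕ)) 10 with hc | hc
  · -- A-project purchased
    obtain ⟨hkA6, hge, hexact⟩ := bosA_facts inv hc haff
    have hkB0 : kB = 0 := inv.hdisj.resolve_right (by omega)
    have hwit := bosA_wit inv hkA6 hc
    have hmle : ρ/α ≤ 1/700 := by
      have h := hminim c hcW hbud 1 (1/700) hwit
      have hr : (1:ℝ)/700 / 1 = 1/700 := by norm_num
      rw [hr] at h
      exact h
    have hρeq : ρ = 1/700 := hexact hmle
    refine ⟨kA+1, 0, ⟨by omega, by omega, Or.inl rfl, ?_, ?_, ?_, ?_, ?_, ?_⟩⟩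
    · rw [Finset.filter_insert, if_pos hc,
        Finset.card_insert_of_notMem (fun hmem => hcW (Finset.mem_filter.mp hmem).1),
        inv.hfA]
    · rw [Finset.filter_insert, if_neg (by omega : ¬ 10 ≤ (c:ℕ)), inv.hfB, hkB0]
    · rw [Finset.card_insert_of_notMem hcW, inv.hcard]; omega
    · intro i hi
      rw [hb' i, uA_one hi hc, one_mul, inv.hbA i hi, hρeq]
      have hkA' : (kA:ℝ) ≤ 6 := by exact_mod_cast hkA6
      rw [max_eq_right (by linarith : (0:ℝ) ≤ (7 - (kA:ℝ))/700 - 1/700)]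
      push_cast
      ring
    · intro i hi
      rw [hb' i]
      exact le_max_left 0 _
    · intro c' hc'10 hc'mem i hival
      have hc'W : c' ∉ W := fun h => hc'mem (Finset.mem_insert_of_mem h)
      have hi700 : 700 ≤ (i:ℕ) := by omega
      rw [hb' i, uA_zero hi700 hc, zero_mul, sub_zero, max_eq_right (inv.hbnn i hi700)]
      exact inv.hbB c' hc'10 hc'W i hival
  · -- B-project purchased
    obtain ⟨hρ1, hratio⟩ := bosB_facts inv hc hcW haff
    have hkA7 : kA = 7 := by
      by_contra hcon
      have hkA6 : kA ≤ 6 := by have := inv.hkA; omega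
      have hkB0 : kB = 0 := inv.hdisj.resolve_right hcon
      obtain ⟨c0, hc0, hc0W⟩ := existsA (by rw [inv.hfA]; omega)
      have hwit := bosA_wit inv hkA6 hc0
      have h := hminim c0 hc0W (bos_budget inv.hcard (by omega)) 1 (1/700) hwit
      have hr : (1:ℝ)/700 / 1 = 1/700 := by norm_num
      rw [hr] at h
      linarith
    have hkB2 : kB ≤ 2 := by omega
    refine ⟨7, kB+1, ⟨by omega, by omega, Or.inr rfl, ?_, ?_, ?_, ?_, ?_, ?_⟩⟩
    · rw [Finset.filter_insert, if_neg (by omega : ¬ (c:ℕ) < 10), inv.hfA, hkA7]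
    · rw [Finset.filter_insert, if_pos hc,
        Finset.card_insert_of_notMem (fun hmem => hcW (Finset.mem_filter.mp hmem).1),
        inv.hfB]
    · rw [Finset.card_insert_of_notMem hcW, inv.hcard]; omega
    · intro i hi
      have hne : (i:ℕ) ≠ (c:ℕ)+690 := by omega
      rw [hb' i, uB_zero hc hne, zero_mul, sub_zero, max_eq_right (InvB.nn inv i),
        inv.hbA i hi, hkA7]
    · intro i hi
      rw [hb' i]
      exact le_max_left 0 _
    · intro c' hc'10 hc'mem i hival
      have hc'W : c' ∉ W := fun h => hc'mem (Finset.mem_insert_of_mem h)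
      have hc'c : c' ≠ c := fun h => hc'mem (h ▸ Finset.mem_insert_self c W)
      have hne : (i:ℕ) ≠ (c:ℕ)+690 := by
        intro hv
        exact hc'c (Fin.ext (by omega))
      rw [hb' i, uB_zero hc hne, zero_mul, sub_zero, max_eq_right (InvB.nn inv i)]
      exact inv.hbB c' hc'10 hc'W i hival

lemma bos_reach_inv {b W} (h : BOSReach 10 cF uF b W) : ∃ kA kB, InvB W b kA kB := by
  induction h with
  | init =>
      refine ⟨0, 0, ⟨by omega, by omega, Or.inl rfl, by simp, by simp, by simp, ?_, ?_, ?_⟩⟩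
      · intro i hi
        show (10:ℝ)/((Fintype.card (Fin 1000) : ℕ):ℝ) = _
        rw [Fintype.card_fin]
        norm_num
      · intro i hi
        show (0:ℝ) ≤ 10/((Fintype.card (Fin 1000) : ℕ):ℝ)
        rw [Fintype.card_fin]
        norm_num
      · intro c hc hcW i hival
        show (10:ℝ)/((Fintype.card (Fin 1000) : ℕ):ℝ) = _
        rw [Fintype.card_fin]
        norm_num
  | step hr hs ih =>
      obtain ⟨kA, kB, inv⟩ := ih
      exact invB_step inv hs

lemma bosMain (W : Finset (Fin 310)) (h : BOSOutcome 10 cF uF W) :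
    (W.filter fun c : Fin 310 => (c:ℕ) < 10).card = 7 ∧
    (W.filter fun c : Fin 310 => 10 ≤ (c:ℕ)).card = 3 := by
  obtain ⟨b, hreach, hnostep⟩ := h
  obtain ⟨kA, kB, inv⟩ := bos_reach_inv hreach
  have hkA7 : kA = 7 := by
    by_contra hcon
    have hkA6 : kA ≤ 6 := by have := inv.hkA; omega
    have hkB0 : kB = 0 := inv.hdisj.resolve_right hcon
    obtain ⟨c, α, ρ, b', hs⟩ := bos_step_exists_A (hkB0 ▸ inv) hkA6
    exact hnostep c α ρ b' hs
  have hkB3 : kB = 3 := by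
    by_contra hcon
    have hkB2 : kB ≤ 2 := by have := inv.hkB; omega
    obtain ⟨c, α, ρ, b', hs⟩ := bos_step_exists_B (hkA7 ▸ inv) hkB2
    exact hnostep c α ρ b' hs
  exact ⟨hkA7 ▸ inv.hfA, hkB3 ▸ inv.hfB⟩


end Unpop

/-- Unpopular-projects instance: 310 unit-cost projects, budget 10, 1000 voters with
endowments `1/100` and cost (approval) utilities; voters `v₀..v₆₉₉` approve the ten
A-projects (indices `< 10`), and each voter `v₇₀₀₊ⱼ` approves the single B-project of
index `10 + j`. Then every valid execution of BOS Equal Shares selects exactly seven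
A-projects and three B-projects, whereas every valid execution of the Method of Equal
Shares (without completion) selects exactly seven A-projects and no B-projects. -/
theorem unpopular_projects_bos_vs_mes :
    let cost : Fin 310 → ℝ := fun _ => 1
    let u : Fin 1000 → Fin 310 → ℝ := fun i c =>
      if ((i : ℕ) < 700 ∧ (c : ℕ) < 10) ∨
         (700 ≤ (i : ℕ) ∧ (c : ℕ) = (i : ℕ) - 700 + 10)
      then (1 : ℝ) else 0
    (∀ W : Finset (Fin 310), BOSOutcome (10 : ℝ) cost u W →
      (W.filter fun c : Fin 310 => (c : ℕ) < 10).card = 7 ∧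
      (W.filter fun c : Fin 310 => 10 ≤ (c : ℕ)).card = 3) ∧
    (∀ W : Finset (Fin 310), MESOutcome (10 : ℝ) cost u W →
      (W.filter fun c : Fin 310 => (c : ℕ) < 10).card = 7 ∧
      (W.filter fun c : Fin 310 => 10 ≤ (c : ℕ)).card = 0) := by
  intro cost u
  exact ⟨fun W h => Unpop.bosMain W h, fun W h => Unpop.mesMain W h⟩
end
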